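/- arXiv:2605.10884 — 2 statements merged into one kernel-verified Lean document; each statement's English description precedes it below -/
import Mathlib

section
/- For every integer k ≥ 0, every x ∈ ℝ and every σ > 0, the Hermite polynomial with variance parameter satisfies |H_k(x, σ²)| ≤ 2^{k-1} (|x|^k + (√k · σ)^k), where H_k(x, σ²) = k! ∑_{m=0}^{⌊k/2⌋} ((-1)^m σ^{2m} / (m!(k-2m)!)) x^{k-2m}. (For k = 0 interpret the right-hand side as ≥ 1.) -/
/-- The `k`-th Hermite polynomial with variance parameter `v = σ²`. -/
noncomputable def hermiteVar (k : ℕ) (x v : ℝ) : ℝ :=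
  (Nat.factorial k : ℝ) * ∑ m ∈ Finset.range (k / 2 + 1),
    ((-1 : ℝ) ^ m * v ^ m / ((Nat.factorial m : ℝ) * (Nat.factorial (k - 2 * m) : ℝ))) *
      x ^ (k - 2 * m)

/-!
Bounding `(2m)! ≤ k^m m!` turns the coefficient `k!/(m!(k-2m)!)` of the `m`-th term into at
most `C(k,2m) k^m`, so `|H_k(x, v)|` is at most the sum of the even-index terms of the binomial
expansion of `(√(kv) + |x|)^k`, hence at most `(√(kv) + |x|)^k`. Convexity of `t ↦ t^k` then gives
`(a + b)^k ≤ 2^(k-1) (a^k + b^k)`.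
-/

open Finset Nat

lemma Nat.factorial_le_choose_two_mul_mul_pow {k m : ℕ} (h : 2 * m ≤ k) :
    k ! ≤ k.choose (2 * m) * k ^ m * (m ! * (k - 2 * m)!) :=
  calc k ! = k.choose (2 * m) * (2 * m)! * (k - 2 * m)! := (choose_mul_factorial_mul_factorial h).symm
    _ ≤ k.choose (2 * m) * (k ^ m * m !) * (k - 2 * m)! := by
      gcongr
      exact (factorial_two_mul_le m).trans (Nat.mul_le_mul_right _ (Nat.pow_le_pow_left h m))
    _ = k.choose (2 * m) * k ^ m * (m ! * (k - 2 * m)!) := by ring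

lemma sum_range_choose_two_mul_le_add_pow {R : Type*} [CommSemiring R] [PartialOrder R]
    [IsOrderedRing R] {a b : R} (ha : 0 ≤ a) (hb : 0 ≤ b) (n : ℕ) :
    ∑ m ∈ range (n / 2 + 1), a ^ (2 * m) * b ^ (n - 2 * m) * n.choose (2 * m) ≤ (a + b) ^ n := by
  rw [add_pow, ← sum_image (f := fun j ↦ a ^ j * b ^ (n - j) * n.choose j) (g := (2 * ·))
    (by intro _ _ _ _ h; simpa using h)]
  refine sum_le_sum_of_subset_of_nonneg ?_ fun _ _ _ => by positivity
  intro j hj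
  simp only [mem_image, mem_range] at hj ⊢
  omega

lemma abs_hermiteVar_term_le {k m : ℕ} (h : 2 * m ≤ k) (x : ℝ) {v : ℝ} (hv : 0 ≤ v) :
    |(k ! : ℝ) * ((-1) ^ m * v ^ m / (m ! * (k - 2 * m)!) * x ^ (k - 2 * m))| ≤
      √(k * v) ^ (2 * m) * |x| ^ (k - 2 * m) * k.choose (2 * m) := by
  have hcoeff : (k ! : ℝ) / (m ! * (k - 2 * m)!) ≤ k.choose (2 * m) * k ^ m := by
    rw [div_le_iff₀ (by positivity)]
    exact_mod_cast factorial_le_choose_two_mul_mul_pow h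
  calc |(k ! : ℝ) * ((-1) ^ m * v ^ m / (m ! * (k - 2 * m)!) * x ^ (k - 2 * m))|
      = (k ! : ℝ) / (m ! * (k - 2 * m)!) * (v ^ m * |x| ^ (k - 2 * m)) := by
        simp only [abs_mul, abs_div, abs_pow, abs_neg, abs_one, one_pow, Nat.abs_cast,
          abs_of_nonneg hv]
        ring
    _ ≤ k.choose (2 * m) * k ^ m * (v ^ m * |x| ^ (k - 2 * m)) := by gcongr
    _ = √(k * v) ^ (2 * m) * |x| ^ (k - 2 * m) * k.choose (2 * m) := by
        rw [pow_mul, Real.sq_sqrt (by positivity)]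
        ring

theorem abs_hermiteVar_le_sqrt_add_pow (k : ℕ) (x : ℝ) {v : ℝ} (hv : 0 ≤ v) :
    |hermiteVar k x v| ≤ (√(k * v) + |x|) ^ k :=
  calc |hermiteVar k x v|
      ≤ ∑ m ∈ range (k / 2 + 1),
          |(k ! : ℝ) * ((-1) ^ m * v ^ m / (m ! * (k - 2 * m)!) * x ^ (k - 2 * m))| := by
        rw [hermiteVar, mul_sum]
        exact abs_sum_le_sum_abs _ _
    _ ≤ ∑ m ∈ range (k / 2 + 1), √(k * v) ^ (2 * m) * |x| ^ (k - 2 * m) * k.choose (2 * m) :=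
        sum_le_sum fun m hm => abs_hermiteVar_term_le (by have := mem_range.mp hm; omega) x hv
    _ ≤ (√(k * v) + |x|) ^ k :=
        sum_range_choose_two_mul_le_add_pow (Real.sqrt_nonneg _) (abs_nonneg x) k

/-- For every `k ≥ 0`, `x ∈ ℝ` and `σ > 0`,
`|H_k(x, σ²)| ≤ 2^{k-1} (|x|^k + (√k σ)^k)`, where for `k = 0` the prefactor `2^{k-1}` is
interpreted via the integer power `2^{(k : ℤ) - 1} = 1/2`, making the right-hand side `1`. -/
theorem hermiteVar_abs_le (k : ℕ) (x σ : ℝ) (hσ : 0 < σ) :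
    |hermiteVar k x (σ ^ 2)| ≤
      (2 : ℝ) ^ ((k : ℤ) - 1) * (|x| ^ k + (Real.sqrt k * σ) ^ k) := by
  rcases Nat.eq_zero_or_pos k with rfl | hk
  · norm_num [hermiteVar]
  have hsqrt : √(k * σ ^ 2) = √k * σ := by
    rw [Real.sqrt_mul (Nat.cast_nonneg k), Real.sqrt_sq hσ.le]
  have hzpow : (2 : ℝ) ^ ((k : ℤ) - 1) = 2 ^ (k - 1) := by
    rw [← zpow_natCast, Nat.cast_sub hk]
    rfl
  calc |hermiteVar k x (σ ^ 2)| ≤ (|x| + √k * σ) ^ k := by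
        rw [add_comm, ← hsqrt]
        exact abs_hermiteVar_le_sqrt_add_pow k x (sq_nonneg σ)
    _ ≤ 2 ^ ((k : ℤ) - 1) * (|x| ^ k + (√k * σ) ^ k) := by
        rw [hzpow]
        exact add_pow_le (abs_nonneg x) (by positivity) k
end

section
/- (Ergodic averaging with product structure.) Let D ⊂ ℝ^d be bounded, let (Ω, F, P) carry an ergodic measure-preserving ℤ^d-action, let A ⊂ Ω be an event of probability θ₀ > 0, and set 1ⁿ(x)(ω) := 1_{⌊nx⌋·orbit ∈ A}. Assume the ergodic theorem in the form: for every bounded measurable h : D → ℝ, ∫_D h(x) 1ⁿ(x) dx → θ₀ ∫_D h(x) dx P-a.s. Let f₁,...,f_M, g₁,...,g_M ∈ C(D̄) and let 𝓗 : ℝ → ℝ be continuous. Then P-a.s., ∫_D 𝓗(∑_{i=1}^M g_i(y) ∫_D f_i(x) 1ⁿ(x) dx) f(y) 1ⁿ(y) dy → θ₀ ∫_D 𝓗(∑_{i=1}^M g_i(y) θ₀ ∫_D f_i(x) dx) f(y) dy for every bounded measurable f. -/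
/-!
Fix `ω` in the full-measure event where the assumed ergodic theorem holds; extending a function
continuous on `closure D` by zero makes it an admissible test function. Then the inner averages
`aₙⁱ = ∫_D fᵢ 1ⁿ` converge to `Aⁱ = θ₀ ∫_D fᵢ`, so `Φₙ(y) = 𝓗(∑ᵢ gᵢ(y) aₙⁱ) φ(y)` converges
pointwise to `Φ(y) = 𝓗(∑ᵢ gᵢ(y) Aⁱ) φ(y)`, uniformly boundedly because `(y, aₙ)` ranges over the
compact set `closure D × ({A} ∪ {aₙ})`. Dominated convergence gives `∫_D (Φₙ - Φ) 1ⁿ → 0`, and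
one more application of the ergodic theorem gives `∫_D Φ 1ⁿ → θ₀ ∫_D Φ`.
-/

open MeasureTheory Filter Topology Set

theorem exists_measurable_abs_le_eqOn_of_continuousOn {α : Type*} [TopologicalSpace α]
    [MeasurableSpace α] [OpensMeasurableSpace α] {D : Set α} {f : α → ℝ}
    (hD : IsCompact (closure D)) (hf : ContinuousOn f (closure D)) :
    ∃ h : α → ℝ, Measurable h ∧ (∃ C, ∀ x, |h x| ≤ C) ∧ EqOn h f D := by
  classical
  obtain ⟨C, hC⟩ := hD.exists_bound_of_continuousOn hf
  refine ⟨(closure D).indicator f, ?_, ⟨max C 0, fun x => ?_⟩,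
    fun x hx => indicator_of_mem (subset_closure hx) f⟩
  · rw [← piecewise_eq_indicator]
    exact hf.measurable_piecewise continuousOn_const isClosed_closure.measurableSet
  · by_cases hx : x ∈ closure D
    · rw [indicator_of_mem hx]
      exact le_max_of_le_left (hC x hx)
    · simp [hx]

theorem exists_abs_mul_le {α : Type*} {f g : α → ℝ} (hf : ∃ C, ∀ x, |f x| ≤ C)
    (hg : ∃ C, ∀ x, |g x| ≤ C) : ∃ C, ∀ x, |f x * g x| ≤ C := by
  obtain ⟨Cf, hCf⟩ := hf
  obtain ⟨Cg, hCg⟩ := hg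
  exact ⟨Cf * Cg, fun x => abs_mul (f x) (g x) ▸
    mul_le_mul (hCf x) (hCg x) (abs_nonneg _) ((abs_nonneg _).trans (hCf x))⟩

theorem tendsto_setIntegral_mul_of_continuousOn {α : Type*} [TopologicalSpace α]
    [MeasurableSpace α] [OpensMeasurableSpace α] {μ : Measure α} {D : Set α}
    (hDm : MeasurableSet D) (hD : IsCompact (closure D)) {w : ℕ → α → ℝ} {θ : ℝ}
    (hlim : ∀ h : α → ℝ, Measurable h → (∃ C, ∀ x, |h x| ≤ C) →
      Tendsto (fun n => ∫ x in D, h x * w n x ∂μ) atTop (𝓝 (θ * ∫ x in D, h x ∂μ)))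
    {u φ : α → ℝ} (hu : ContinuousOn u (closure D)) (hφm : Measurable φ)
    (hφb : ∃ C, ∀ x, |φ x| ≤ C) :
    Tendsto (fun n => ∫ x in D, u x * φ x * w n x ∂μ) atTop
      (𝓝 (θ * ∫ x in D, u x * φ x ∂μ)) := by
  obtain ⟨v, hvm, hvb, hvu⟩ := exists_measurable_abs_le_eqOn_of_continuousOn hD hu
  have hvφ : EqOn (fun x => v x * φ x) (fun x => u x * φ x) D := fun x hx => by
    simp only [hvu hx]
  have key := hlim (fun x => v x * φ x) (hvm.mul hφm) (exists_abs_mul_le hvb hφb)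
  rw [setIntegral_congr_fun hDm hvφ] at key
  refine key.congr fun n => setIntegral_congr_fun hDm fun x hx => ?_
  simp only [hvu hx]

theorem exists_abs_le_comp_sum_mul_of_isCompact {α ι : Type*} [TopologicalSpace α] [Fintype ι]
    {S : Set α} {K : Set (ι → ℝ)} (hS : IsCompact S) (hK : IsCompact K) {g : ι → α → ℝ}
    (hg : ∀ i, ContinuousOn (g i) S) {H : ℝ → ℝ} (hH : Continuous H) :
    ∃ C, ∀ y ∈ S, ∀ c ∈ K, |H (∑ i, g i y * c i)| ≤ C := by
  have hcont : ContinuousOn (fun p : α × (ι → ℝ) => H (∑ i, g i p.1 * p.2 i)) (S ×ˢ K) :=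
    hH.comp_continuousOn <| continuousOn_finsetSum _ fun i _ =>
      ((hg i).comp continuousOn_fst mapsTo_fst_prod).mul
        ((continuous_apply i).comp continuous_snd).continuousOn
  obtain ⟨C, hC⟩ := (hS.prod hK).exists_bound_of_continuousOn hcont
  exact ⟨C, fun y hy c hc => hC (y, c) ⟨hy, hc⟩⟩

theorem tendsto_integral_mul_of_tendsto_of_abs_le {α : Type*} [MeasurableSpace α]
    {μ : Measure α} [IsFiniteMeasure μ] {F : ℕ → α → ℝ} {G : α → ℝ} {w : ℕ → α → ℝ}
    {C B L : ℝ} (hFm : ∀ n, AEStronglyMeasurable (F n) μ) (hFC : ∀ n, ∀ᵐ x ∂μ, |F n x| ≤ C)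
    (hFG : ∀ᵐ x ∂μ, Tendsto (fun n => F n x) atTop (𝓝 (G x)))
    (hwm : ∀ n, AEStronglyMeasurable (w n) μ) (hwB : ∀ n, ∀ᵐ x ∂μ, |w n x| ≤ B)
    (hGw : Tendsto (fun n => ∫ x, G x * w n x ∂μ) atTop (𝓝 L)) :
    Tendsto (fun n => ∫ x, F n x * w n x ∂μ) atTop (𝓝 L) := by
  have hGm : AEStronglyMeasurable G μ := aestronglyMeasurable_of_tendsto_ae atTop hFm hFG
  have hGC : ∀ᵐ x ∂μ, |G x| ≤ C := by
    filter_upwards [hFG, ae_all_iff.2 hFC] with x hx hxC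
    exact le_of_tendsto (continuous_abs.tendsto _ |>.comp hx) (Eventually.of_forall hxC)
  have hdiff : Tendsto (fun n => ∫ x, (F n x - G x) * w n x ∂μ) atTop (𝓝 0) := by
    have hB : ∀ᵐ x ∂μ, ∀ n, |(F n x - G x) * w n x| ≤ 2 * C * B := by
      filter_upwards [ae_all_iff.2 hFC, hGC, ae_all_iff.2 hwB] with x hxF hxG hxw n
      rw [abs_mul]
      exact mul_le_mul (by linarith [abs_sub (F n x) (G x), hxF n])
        (hxw n) (abs_nonneg _) (by linarith [abs_nonneg (F n x), hxF n])
    have hlim : ∀ᵐ x ∂μ, Tendsto (fun n => (F n x - G x) * w n x) atTop (𝓝 0) := by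
      filter_upwards [hFG, ae_all_iff.2 hwB] with x hx hxw
      refine (tendsto_sub_nhds_zero_iff.2 hx).zero_mul_isBoundedUnder_le
        ⟨B, eventually_map.2 (Eventually.of_forall fun n => ?_)⟩
      simpa using hxw n
    simpa using tendsto_integral_of_dominated_convergence (fun _ => 2 * C * B)
      (fun n => ((hFm n).sub hGm).mul (hwm n)) (integrable_const _)
      (fun n => hB.mono fun x hx => hx n) hlim
  have hint : ∀ {f : α → ℝ}, AEStronglyMeasurable f μ → (∀ᵐ x ∂μ, |f x| ≤ C) →
      ∀ n, Integrable (fun x => f x * w n x) μ := fun hf hfC n =>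
    .of_bound (hf.mul (hwm n)) (C * B) <| by
      filter_upwards [hfC, hwB n] with x hxf hxw
      rw [Real.norm_eq_abs, abs_mul]
      exact mul_le_mul hxf hxw (abs_nonneg _) ((abs_nonneg _).trans hxf)
  rw [← add_zero L]
  refine (hGw.add hdiff).congr fun n => ?_
  simp only [sub_mul, integral_sub (hint (hFm n) (hFC n) n) (hint hGm hGC n)]
  ring

theorem ergodic_averaging_product_structure_general (d : ℕ)
    (D : Set (EuclideanSpace ℝ (Fin d))) (hDb : Bornology.IsBounded D)
    (hDm : MeasurableSet D)
    {Ω : Type*} [MeasurableSpace Ω] (P : Measure Ω) [IsProbabilityMeasure P]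
    (θ₀ : ℝ)
    (ind : ℕ → EuclideanSpace ℝ (Fin d) → Ω → ℝ)
    (hind01 : ∀ n x ωel, ind n x ωel = 0 ∨ ind n x ωel = 1)
    (hindm : ∀ n ωel, Measurable fun x => ind n x ωel)
    (hergodic : ∀ᵐ ωel ∂P, ∀ h : EuclideanSpace ℝ (Fin d) → ℝ,
      Measurable h → (∃ Ch : ℝ, ∀ x, |h x| ≤ Ch) →
      Filter.Tendsto (fun n => ∫ x in D, h x * ind n x ωel) Filter.atTop
        (nhds (θ₀ * ∫ x in D, h x)))
    (M : ℕ) (f g : Fin M → EuclideanSpace ℝ (Fin d) → ℝ)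
    (hf : ∀ i, ContinuousOn (f i) (closure D)) (hg : ∀ i, ContinuousOn (g i) (closure D))
    (𝓗 : ℝ → ℝ) (h𝓗 : Continuous 𝓗) :
    ∀ᵐ ωel ∂P, ∀ φ : EuclideanSpace ℝ (Fin d) → ℝ,
      Measurable φ → (∃ Cφ : ℝ, ∀ x, |φ x| ≤ Cφ) →
      Filter.Tendsto
        (fun n => ∫ y in D,
          𝓗 (∑ i, g i y * ∫ x in D, f i x * ind n x ωel) * φ y * ind n y ωel)
        Filter.atTop
        (nhds (θ₀ * ∫ y in D,
          𝓗 (∑ i, g i y * (θ₀ * ∫ x in D, f i x)) * φ y)) := by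
  filter_upwards [hergodic] with ω herg
  rintro φ hφm ⟨Cφ, hCφ⟩
  have hK : IsCompact (closure D) := hDb.isCompact_closure
  have : IsFiniteMeasure (volume.restrict D) :=
    isFiniteMeasure_restrict.2 hDb.measure_lt_top.ne
  set a : ℕ → Fin M → ℝ := fun n i => ∫ x in D, f i x * ind n x ω
  set A : Fin M → ℝ := fun i => θ₀ * ∫ x in D, f i x
  have ha : Tendsto a atTop (𝓝 A) := tendsto_pi_nhds.2 fun i => by
    simpa using tendsto_setIntegral_mul_of_continuousOn (φ := fun _ => 1) hDm hK herg (hf i)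
      measurable_const ⟨1, fun _ => le_of_eq abs_one⟩
  have hu : ∀ c : Fin M → ℝ, ContinuousOn (fun y => 𝓗 (∑ i, g i y * c i)) (closure D) :=
    fun c => h𝓗.comp_continuousOn <| continuousOn_finsetSum _ fun i _ =>
      (hg i).mul continuousOn_const
  obtain ⟨C, hC⟩ := exists_abs_le_comp_sum_mul_of_isCompact hK ha.isCompact_insert_range hg h𝓗
  refine tendsto_integral_mul_of_tendsto_of_abs_le
    (F := fun n y => 𝓗 (∑ i, g i y * a n i) * φ y) (C := C * Cφ) (B := 1)
    (fun n => (((hu (a n)).mono subset_closure).aestronglyMeasurable hDm).mul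
      hφm.aestronglyMeasurable)
    (fun n => ae_restrict_of_forall_mem hDm fun y hy => ?_)
    (ae_of_all _ fun y => ((h𝓗.tendsto _).comp <| tendsto_finsetSum _ fun i _ =>
      (tendsto_pi_nhds.1 ha i).const_mul _).mul_const _)
    (fun n => (hindm n ω).aestronglyMeasurable)
    (fun n => ae_of_all _ fun y => by rcases hind01 n y ω with h | h <;> simp [h])
    (tendsto_setIntegral_mul_of_continuousOn hDm hK herg (hu A) hφm ⟨Cφ, hCφ⟩)
  have hCy := hC y (subset_closure hy) _ (mem_insert_of_mem _ (mem_range_self n))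
  rw [abs_mul]
  exact mul_le_mul hCy (hCφ y) (abs_nonneg _) ((abs_nonneg _).trans hCy)

/-- Ergodic averaging with product structure. Assume the ergodic theorem in the form: a.s.,
for every bounded measurable `h`, `∫_D h(x) 1ⁿ(x) dx → θ₀ ∫_D h(x) dx`. Then a.s., for all
`f₁,…,f_M, g₁,…,g_M ∈ C(D̄)`, continuous `𝓗`, and bounded measurable `φ`,
`∫_D 𝓗(∑ᵢ gᵢ(y) ∫_D fᵢ(x) 1ⁿ(x) dx) φ(y) 1ⁿ(y) dy
  → θ₀ ∫_D 𝓗(∑ᵢ gᵢ(y) θ₀ ∫_D fᵢ(x) dx) φ(y) dy`. -/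
theorem ergodic_averaging_product_structure (d : ℕ)
    (D : Set (EuclideanSpace ℝ (Fin d))) (hDb : Bornology.IsBounded D)
    (hDm : MeasurableSet D)
    {Ω : Type*} [MeasurableSpace Ω] (P : Measure Ω) [IsProbabilityMeasure P]
    (θ₀ : ℝ) (hθ₀ : 0 < θ₀)
    (ind : ℕ → EuclideanSpace ℝ (Fin d) → Ω → ℝ)
    (hind01 : ∀ n x ωel, ind n x ωel = 0 ∨ ind n x ωel = 1)
    (hindm : ∀ n ωel, Measurable fun x => ind n x ωel)
    (hergodic : ∀ᵐ ωel ∂P, ∀ h : EuclideanSpace ℝ (Fin d) → ℝ,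
      Measurable h → (∃ Ch : ℝ, ∀ x, |h x| ≤ Ch) →
      Filter.Tendsto (fun n => ∫ x in D, h x * ind n x ωel) Filter.atTop
        (nhds (θ₀ * ∫ x in D, h x)))
    (M : ℕ) (f g : Fin M → EuclideanSpace ℝ (Fin d) → ℝ)
    (hf : ∀ i, ContinuousOn (f i) (closure D)) (hg : ∀ i, ContinuousOn (g i) (closure D))
    (𝓗 : ℝ → ℝ) (h𝓗 : Continuous 𝓗) :
    ∀ᵐ ωel ∂P, ∀ φ : EuclideanSpace ℝ (Fin d) → ℝ,
      Measurable φ → (∃ Cφ : ℝ, ∀ x, |φ x| ≤ Cφ) →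
      Filter.Tendsto
        (fun n => ∫ y in D,
          𝓗 (∑ i, g i y * ∫ x in D, f i x * ind n x ωel) * φ y * ind n y ωel)
        Filter.atTop
        (nhds (θ₀ * ∫ y in D,
          𝓗 (∑ i, g i y * (θ₀ * ∫ x in D, f i x)) * φ y)) :=
  ergodic_averaging_product_structure_general d D hDb hDm P θ₀ ind hind01 hindm hergodic M f g hf hg
    𝓗 h𝓗
end
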